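/- arXiv:1909.03350 — 2 statements merged into one kernel-verified Lean document; each statement's English description precedes it below -/
import Mathlib

section
/- Given positive integers n_1, n_2, n_3 and a graph G = (V, E) with |V| = n_1 + n_2 + n_3, a partition of V into parts of sizes n_1, n_2, n_3 is a proper 3-coloring (no edge inside a part) if and only if ∑_{e=(u,v)∈E} cost(e) = (n_1+n_2+n_3)·|E|, where cost(e) = n_1+n_2+n_3 if u and v are in different parts and cost(e) = n_1+n_2+n_3+2 if they are in the same part. -/
/-- Correctness of the reduction from `3-COLOR` with prescribed color-class
sizes: a partition of the `n₁+n₂+n₃` vertices into parts of sizes `n₁, n₂, n₃`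
is a proper 3-coloring iff the total edge cost equals `(n₁+n₂+n₃)·|E|`, where
an edge costs `n₁+n₂+n₃` if its endpoints are in different parts and
`n₁+n₂+n₃+2` if they are in the same part. -/
theorem threecolor_reduction_correct (n1 n2 n3 : ℕ)
    (h1 : 0 < n1) (h2 : 0 < n2) (h3 : 0 < n3)
    (E : Finset (Fin (n1 + n2 + n3) × Fin (n1 + n2 + n3)))
    (hE : ∀ e ∈ E, e.1 ≠ e.2)
    (c : Fin (n1 + n2 + n3) → Fin 3)
    (hc1 : (Finset.univ.filter fun v => c v = 0).card = n1)
    (hc2 : (Finset.univ.filter fun v => c v = 1).card = n2)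
    (hc3 : (Finset.univ.filter fun v => c v = 2).card = n3) :
    (∀ e ∈ E, c e.1 ≠ c e.2) ↔
      ∑ e ∈ E, (if c e.1 = c e.2 then n1 + n2 + n3 + 2 else n1 + n2 + n3)
        = (n1 + n2 + n3) * E.card := by
  have key : ∑ e ∈ E, (if c e.1 = c e.2 then n1 + n2 + n3 + 2 else n1 + n2 + n3)
      = (n1 + n2 + n3) * E.card + 2 * (E.filter fun e => c e.1 = c e.2).card := by
    rw [Finset.sum_ite, Finset.sum_const, Finset.sum_const, smul_eq_mul, smul_eq_mul]
    have hsplit : (E.filter fun e => c e.1 = c e.2).card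
        + (E.filter fun e => ¬ c e.1 = c e.2).card = E.card :=
      Finset.card_filter_add_card_filter_not _
    rw [← hsplit]
    ring
  rw [key]
  constructor
  · intro h
    have : (E.filter fun e => c e.1 = c e.2).card = 0 := by
      rw [Finset.card_eq_zero, Finset.filter_eq_empty_iff]
      intro e he
      exact h e he
    omega
  · intro h e he hne
    have hpos : 0 < (E.filter fun e => c e.1 = c e.2).card :=
      Finset.card_pos.mpr ⟨e, Finset.mem_filter.mpr ⟨he, hne⟩⟩
    omega
end

section
/- If the minimum over team partitions (with fixed part sizes n_1, n_2, n_3) of the total diversity ∑_{k} D_k equals n·|E| where n = n_1+n_2+n_3, then G admits a proper 3-coloring with color class sizes n_1, n_2, n_3; conversely if G admits such a coloring, the minimum is exactly n·|E|. -/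
/-- NP-hardness reduction, optimum characterization: with one feature per edge
contributing diversity `n + 2·[endpoints share a team]`, the minimum total
diversity over team partitions with part sizes `n₁, n₂, n₃` equals `n·|E|`
iff `G` admits a proper 3-coloring with color class sizes `n₁, n₂, n₃`. -/
theorem threecolor_reduction_min (n1 n2 n3 : ℕ)
    (h1 : 0 < n1) (h2 : 0 < n2) (h3 : 0 < n3)
    (E : Finset (Fin (n1 + n2 + n3) × Fin (n1 + n2 + n3)))
    (hE : ∀ e ∈ E, e.1 ≠ e.2)
    (A : Finset (Fin (n1 + n2 + n3) → Fin 3))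
    (hA : A = Finset.univ.filter fun c =>
      (Finset.univ.filter fun v => c v = 0).card = n1 ∧
      (Finset.univ.filter fun v => c v = 1).card = n2 ∧
      (Finset.univ.filter fun v => c v = 2).card = n3)
    (hAne : A.Nonempty) :
    A.inf' hAne (fun c => ∑ e ∈ E,
        (n1 + n2 + n3 + 2 * (if c e.1 = c e.2 then 1 else 0)))
      = (n1 + n2 + n3) * E.card
    ↔ ∃ c ∈ A, ∀ e ∈ E, c e.1 ≠ c e.2 := by
  have key : ∀ c : Fin (n1 + n2 + n3) → Fin 3,
      (∑ e ∈ E, (n1 + n2 + n3 + 2 * (if c e.1 = c e.2 then 1 else 0))) = (n1 + n2 + n3) * E.card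
      ↔ ∀ e ∈ E, c e.1 ≠ c e.2 := by
    intro c
    rw [Finset.sum_add_distrib, Finset.sum_const, smul_eq_mul, mul_comm]
    constructor
    · intro h e he
      have h2 : ∑ e ∈ E, 2 * (if c e.1 = c e.2 then 1 else 0) = 0 := by omega
      rw [Finset.sum_eq_zero_iff] at h2
      have := h2 e he
      intro hc
      simp [hc] at this
    · intro h
      have : ∑ e ∈ E, 2 * (if c e.1 = c e.2 then 1 else 0) = 0 :=
        Finset.sum_eq_zero fun e he => by simp [h e he]
      omega
  have lb : ∀ c : Fin (n1 + n2 + n3) → Fin 3,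
      (n1 + n2 + n3) * E.card ≤ ∑ e ∈ E, (n1 + n2 + n3 + 2 * (if c e.1 = c e.2 then 1 else 0)) := by
    intro c
    calc (n1 + n2 + n3) * E.card = ∑ _e ∈ E, (n1 + n2 + n3) := by rw [Finset.sum_const, smul_eq_mul, mul_comm]
    _ ≤ _ := Finset.sum_le_sum fun e _ => by omega
  constructor
  · intro h
    obtain ⟨c, hc, hce⟩ := Finset.exists_mem_eq_inf' hAne
      (fun c => ∑ e ∈ E, (n1 + n2 + n3 + 2 * (if c e.1 = c e.2 then 1 else 0)))
    exact ⟨c, hc, (key c).1 (hce ▸ h)⟩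
  · rintro ⟨c, hc, hp⟩
    apply le_antisymm
    · exact (Finset.inf'_le _ hc).trans_eq ((key c).2 hp)
    · exact Finset.le_inf' _ _ fun b _ => lb b
end
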